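/- arXiv:2110.11912 — 4 statements merged into one kernel-verified Lean document; each statement's English description precedes it below -/
import Mathlib

section
/- Relation of peculiar velocities to the stress tensor (Lemma 2.2): under the binary mixture setup with velocities in ℝ^d, the outer-product identity ρ̃₁ w₁ ⊗ w₁ + ρ̃₂ w₂ ⊗ w₂ = ρ̃₁ ω₁ ⊗ ω₁ + ρ̃₂ ω₂ ⊗ ω₂ − (1/ρ) J̃ᵘ ⊗ J̃ᵘ holds, where a ⊗ b denotes the d×d matrix with entries aᵢ bⱼ. -/
/-!
Since `ρ = ρ̃₁ + ρ̃₂`, the definition of `v` gives `ρ (v - u) = J̃ᵘ`, so `wⱼ = ωⱼ - J̃ᵘ / ρ`: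
the `wⱼ` are the `ωⱼ` recentred at their `ρ̃`-weighted mean. The identity is then the
parallel-axis (Steiner) rule for weighted second moments: recentring at the mean lowers
`∑ ρ̃ⱼ ωⱼ ⊗ ωⱼ` by `(∑ ρ̃ⱼ)⁻¹ (∑ ρ̃ⱼ ωⱼ) ⊗ (∑ ρ̃ⱼ ωⱼ)`.
-/

open Matrix Finset

namespace Matrix

variable {ι m n R : Type*}

theorem vecMulVec_sum [NonUnitalNonAssocSemiring R] (s : Finset ι) (w : m → R) (v : ι → n → R) :
    vecMulVec w (∑ i ∈ s, v i) = ∑ i ∈ s, vecMulVec w (v i) := by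
  ext k l
  simp [vecMulVec_apply, Matrix.sum_apply, Finset.mul_sum]

theorem sum_vecMulVec [NonUnitalNonAssocSemiring R] (s : Finset ι) (w : ι → m → R) (v : n → R) :
    vecMulVec (∑ i ∈ s, w i) v = ∑ i ∈ s, vecMulVec (w i) v := by
  ext k l
  simp [vecMulVec_apply, Matrix.sum_apply, Finset.sum_mul]

theorem sum_smul_vecMulVec_sub_sub [CommRing R] (s : Finset ι) (μ : ι → R) (x : ι → n → R)
    (c : n → R) :
    ∑ i ∈ s, μ i • vecMulVec (x i - c) (x i - c) =
      ∑ i ∈ s, μ i • vecMulVec (x i) (x i) - vecMulVec c (∑ i ∈ s, μ i • x i)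
        - vecMulVec (∑ i ∈ s, μ i • x i) c + (∑ i ∈ s, μ i) • vecMulVec c c := by
  have expand (i : ι) : μ i • vecMulVec (x i - c) (x i - c) =
      μ i • vecMulVec (x i) (x i) - vecMulVec c (μ i • x i) - vecMulVec (μ i • x i) c
        + μ i • vecMulVec c c := by
    rw [vecMulVec_sub, sub_vecMulVec, sub_vecMulVec, vecMulVec_smul, smul_vecMulVec]
    module
  simp only [expand, sum_add_distrib, sum_sub_distrib, vecMulVec_sum, sum_vecMulVec, sum_smul]

theorem sum_smul_vecMulVec_sub_centroid [Field R] (s : Finset ι) (μ : ι → R) (x : ι → n → R)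
    (c : n → R) (hμ : ∑ i ∈ s, μ i ≠ 0) (hc : (∑ i ∈ s, μ i) • c = ∑ i ∈ s, μ i • x i) :
    ∑ i ∈ s, μ i • vecMulVec (x i - c) (x i - c) =
      ∑ i ∈ s, μ i • vecMulVec (x i) (x i)
        - (∑ i ∈ s, μ i)⁻¹ • vecMulVec (∑ i ∈ s, μ i • x i) (∑ i ∈ s, μ i • x i) := by
  have hc' : c = (∑ i ∈ s, μ i)⁻¹ • ∑ i ∈ s, μ i • x i := by
    rw [← hc, inv_smul_smul₀ hμ]
  rw [sum_smul_vecMulVec_sub_sub, hc', vecMulVec_smul, smul_vecMulVec, smul_vecMulVec,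
    vecMulVec_smul, smul_smul, mul_inv_cancel₀ hμ, one_smul]
  abel

end Matrix

theorem peculiar_velocities_stress_identity_general
    {d : ℕ}
    (ρt₁ ρt₂ ρ : ℝ)
    (hρ : ρ = ρt₁ + ρt₂) (hρ0 : ρ ≠ 0)
    (v₁ v₂ v u w₁ w₂ ω₁ ω₂ Jtu : Fin d → ℝ)
    (hv : ρ • v = ρt₁ • v₁ + ρt₂ • v₂)
    (hw₁ : w₁ = v₁ - v) (hw₂ : w₂ = v₂ - v)
    (hω₁ : ω₁ = v₁ - u) (hω₂ : ω₂ = v₂ - u)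
    (hJtu : Jtu = ρt₁ • ω₁ + ρt₂ • ω₂) :
    ρt₁ • vecMulVec w₁ w₁ + ρt₂ • vecMulVec w₂ w₂ =
      ρt₁ • vecMulVec ω₁ ω₁ + ρt₂ • vecMulVec ω₂ ω₂
        - (1 / ρ) • vecMulVec Jtu Jtu := by
  have hw (j : Fin 2) : ![w₁, w₂] j = ![ω₁, ω₂] j - (v - u) := by
    fin_cases j <;> simp [hw₁, hw₂, hω₁, hω₂]
  have hflux : ρ • (v - u) = Jtu := by
    rw [smul_sub, hv, hJtu, hω₁, hω₂, hρ]
    module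
  have key := sum_smul_vecMulVec_sub_centroid univ ![ρt₁, ρt₂] ![ω₁, ω₂] (v - u)
    (by simpa [← hρ]) (by simpa [← hρ, ← hJtu] using hflux)
  simp only [← hw, Fin.sum_univ_two, Matrix.cons_val_zero, Matrix.cons_val_one] at key
  rw [key, ← hρ, ← hJtu, one_div]

/-- **Relation of peculiar velocities to the stress tensor (Lemma 2.2).**
Under the binary mixture setup with velocities in `ℝ^d`,
`ρt₁ w₁ ⊗ w₁ + ρt₂ w₂ ⊗ w₂ = ρt₁ ω₁ ⊗ ω₁ + ρt₂ ω₂ ⊗ ω₂ - (1/ρ) Jtu ⊗ Jtu`,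
where `a ⊗ b` is the `d × d` matrix with entries `aᵢ bⱼ` (`Matrix.vecMulVec`),
`wⱼ = vⱼ - v`, `ωⱼ = vⱼ - u` and `Jtu = ρt₁ ω₁ + ρt₂ ω₂` is the diffusive
flux `J̃ᵘ`. -/
theorem peculiar_velocities_stress_identity
    {d : ℕ}
    (ρ₁ ρ₂ φ₁ φ₂ ρt₁ ρt₂ ρ : ℝ)
    (hρ₁ : 0 < ρ₁) (hρ₂ : 0 < ρ₂)
    (hφ : φ₁ + φ₂ = 1)
    (hρt₁ : ρt₁ = ρ₁ * φ₁) (hρt₂ : ρt₂ = ρ₂ * φ₂)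
    (hρ : ρ = ρt₁ + ρt₂) (hρ0 : ρ ≠ 0)
    (v₁ v₂ v u w₁ w₂ ω₁ ω₂ Jtu : Fin d → ℝ)
    (hv : ρ • v = ρt₁ • v₁ + ρt₂ • v₂)
    (hu : u = φ₁ • v₁ + φ₂ • v₂)
    (hw₁ : w₁ = v₁ - v) (hw₂ : w₂ = v₂ - v)
    (hω₁ : ω₁ = v₁ - u) (hω₂ : ω₂ = v₂ - u)
    (hJtu : Jtu = ρt₁ • ω₁ + ρt₂ • ω₂) :
    ρt₁ • vecMulVec w₁ w₁ + ρt₂ • vecMulVec w₂ w₂ =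
      ρt₁ • vecMulVec ω₁ ω₁ + ρt₂ • vecMulVec ω₂ ω₂
        - (1 / ρ) • vecMulVec Jtu Jtu :=
  peculiar_velocities_stress_identity_general ρt₁ ρt₂ ρ hρ hρ0 v₁ v₂ v u w₁ w₂ ω₁ ω₂ Jtu hv hw₁ hw₂
    hω₁ hω₂ hJtu
end

section
/- First identity of Lemma 3.1: let ψ : ℝ × ℝ^d → ℝ be continuously differentiable, φ : ℝ^d → ℝ twice continuously differentiable, and define r(a) = ρ₁(1+a)/2 + ρ₂(1−a)/2 and Ψ(a,q) = r(a) ψ(a,q). Fix x ∈ ℝ^d with r(φ(x)) ≠ 0 and assume the vector fields y ↦ ∂₂Ψ(φ(y), ∇φ(y)) and y ↦ r(φ(y)) ∂₂ψ(φ(y), ∇φ(y)) are differentiable at x. Define μ̂(x) = ∂₁Ψ(φ(x), ∇φ(x)) − div[y ↦ ∂₂Ψ(φ(y), ∇φ(y))](x) and μ̂̂(x) = ∂₁ψ(φ(x), ∇φ(x)) − (1/r(φ(x))) div[y ↦ r(φ(y)) ∂₂ψ(φ(y), ∇φ(y))](x). Then μ̂(x) = r(φ(x)) μ̂̂(x)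 + ψ(φ(x), ∇φ(x)) · [[ρ]], where [[ρ]] = (ρ₁ − ρ₂)/2. -/
/-!
The density `r` is affine with slope `[[ρ]]`, so the Leibniz rule for `Ψ(a, q) = r(a) ψ(a, q)`
gives `∂₁Ψ = r ∂₁ψ + ψ [[ρ]]` and `∂₂Ψ = r ∂₂ψ`. The two divergence terms are then the
divergence of one and the same field, and the identity is algebra once `r(φ(x)) ≠ 0`.
-/

/-- The spatial gradient of a scalar field on `ℝ^d`. -/
noncomputable def grad {d : ℕ} (f : (Fin d → ℝ) → ℝ) (x : Fin d → ℝ) : Fin d → ℝ :=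
  fun i => fderiv ℝ f x (Pi.single i 1)

/-- The divergence `∑ i, ∂ᵢ Fᵢ` of a vector field on `ℝ^d`. -/
noncomputable def diver {d : ℕ} (F : (Fin d → ℝ) → (Fin d → ℝ)) (x : Fin d → ℝ) : ℝ :=
  ∑ i, fderiv ℝ F x (Pi.single i 1) i

/-- The partial derivative of `Ψ : ℝ × ℝ^d → ℝ` in the scalar slot. -/
noncomputable def d1 {d : ℕ} (Ψ : ℝ × (Fin d → ℝ) → ℝ) (a : ℝ) (q : Fin d → ℝ) : ℝ :=
  fderiv ℝ Ψ (a, q) (1, 0)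

/-- The partial gradient of `Ψ : ℝ × ℝ^d → ℝ` in the vector slot. -/
noncomputable def d2 {d : ℕ} (Ψ : ℝ × (Fin d → ℝ) → ℝ) (a : ℝ) (q : Fin d → ℝ) :
    Fin d → ℝ :=
  fun i => fderiv ℝ Ψ (a, q) (0, Pi.single i 1)

section ProductWithFirstCoordinate

variable {E : Type*} [NormedAddCommGroup E] [NormedSpace ℝ E]
  {r : ℝ → ℝ} {ψ : ℝ × E → ℝ} {p : ℝ × E}

theorem hasFDerivAt_comp_fst_mul (hr : DifferentiableAt ℝ r p.1)
    (hψ : DifferentiableAt ℝ ψ p) :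
    HasFDerivAt (fun q : ℝ × E => r q.1 * ψ q)
      (r p.1 • fderiv ℝ ψ p + ψ p • deriv r p.1 • ContinuousLinearMap.fst ℝ ℝ E) p :=
  (hr.hasDerivAt.comp_hasFDerivAt p hasFDerivAt_fst).mul hψ.hasFDerivAt

end ProductWithFirstCoordinate

section PartialDerivatives

variable {d : ℕ} {r : ℝ → ℝ} {ψ : ℝ × (Fin d → ℝ) → ℝ} {a : ℝ} {q : Fin d → ℝ}

theorem d1_comp_fst_mul (hr : DifferentiableAt ℝ r a) (hψ : DifferentiableAt ℝ ψ (a, q)) :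
    d1 (fun p => r p.1 * ψ p) a q = r a * d1 ψ a q + ψ (a, q) * deriv r a := by
  simp [d1, (hasFDerivAt_comp_fst_mul (p := (a, q)) hr hψ).fderiv]

theorem d2_comp_fst_mul (hr : DifferentiableAt ℝ r a) (hψ : DifferentiableAt ℝ ψ (a, q)) :
    d2 (fun p => r p.1 * ψ p) a q = r a • d2 ψ a q := by
  funext i
  simp [d2, (hasFDerivAt_comp_fst_mul (p := (a, q)) hr hψ).fderiv]

end PartialDerivatives

theorem chemical_potential_identity_one_general
    {d : ℕ} (ρ₁ ρ₂ : ℝ)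
    (ψ : ℝ × (Fin d → ℝ) → ℝ) (hψ : ContDiff ℝ 1 ψ)
    (φ : (Fin d → ℝ) → ℝ)
    (r : ℝ → ℝ) (hr : ∀ a, r a = ρ₁ * (1 + a) / 2 + ρ₂ * (1 - a) / 2)
    (Ψ : ℝ × (Fin d → ℝ) → ℝ) (hΨ : ∀ a q, Ψ (a, q) = r a * ψ (a, q))
    (x : Fin d → ℝ) (hrx : r (φ x) ≠ 0) :
    d1 Ψ (φ x) (grad φ x) - diver (fun y => d2 Ψ (φ y) (grad φ y)) x =
      r (φ x) *
        (d1 ψ (φ x) (grad φ x)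
          - (1 / r (φ x)) * diver (fun y => r (φ y) • d2 ψ (φ y) (grad φ y)) x)
      + ψ (φ x, grad φ x) * ((ρ₁ - ρ₂) / 2) := by
  have hr_affine : r = fun a => (ρ₁ + ρ₂) / 2 + (ρ₁ - ρ₂) / 2 * a := by
    funext a; rw [hr]; ring
  have hr_deriv : ∀ a, HasDerivAt r ((ρ₁ - ρ₂) / 2) a := fun a => by
    rw [hr_affine]
    simpa using ((hasDerivAt_id a).const_mul ((ρ₁ - ρ₂) / 2)).const_add ((ρ₁ + ρ₂) / 2)
  have hΨ_eq : Ψ = fun p => r p.1 * ψ p := funext fun p => hΨ p.1 p.2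
  have hψ_diff : ∀ p, DifferentiableAt ℝ ψ p := hψ.differentiable one_ne_zero
  have hd1 := d1_comp_fst_mul (hr_deriv (φ x)).differentiableAt (hψ_diff (φ x, grad φ x))
  have hd2 : ∀ a q, d2 Ψ a q = r a • d2 ψ a q := fun a q => by
    rw [hΨ_eq]; exact d2_comp_fst_mul (hr_deriv a).differentiableAt (hψ_diff (a, q))
  rw [hΨ_eq, hd1, (hr_deriv _).deriv, ← hΨ_eq]
  simp only [hd2]
  field_simp
  ring

/-- **First identity of Lemma 3.1.**
Let `ψ` be a `C¹` mass-measure-based free energy, `φ` a `C²` order-parameter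
field, `r(a) = ρ₁(1+a)/2 + ρ₂(1-a)/2` the density and `Ψ(a,q) = r(a) ψ(a,q)`
the associated volume-measure-based free energy.  If `r(φ(x)) ≠ 0` and the two
flux fields are differentiable at `x`, then the chemical potentials
`μ̂(x) = ∂₁Ψ(φ,∇φ) - div(∂₂Ψ(φ,∇φ))` and
`μ̂̂(x) = ∂₁ψ(φ,∇φ) - (1/r(φ)) div(r(φ) ∂₂ψ(φ,∇φ))` satisfy
`μ̂ = r(φ) μ̂̂ + ψ(φ,∇φ) [[ρ]]` with `[[ρ]] = (ρ₁-ρ₂)/2`. -/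
theorem chemical_potential_identity_one
    {d : ℕ} (ρ₁ ρ₂ : ℝ) (hρ₁ : 0 < ρ₁) (hρ₂ : 0 < ρ₂)
    (ψ : ℝ × (Fin d → ℝ) → ℝ) (hψ : ContDiff ℝ 1 ψ)
    (φ : (Fin d → ℝ) → ℝ) (hφ : ContDiff ℝ 2 φ)
    (r : ℝ → ℝ) (hr : ∀ a, r a = ρ₁ * (1 + a) / 2 + ρ₂ * (1 - a) / 2)
    (Ψ : ℝ × (Fin d → ℝ) → ℝ) (hΨ : ∀ a q, Ψ (a, q) = r a * ψ (a, q))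
    (x : Fin d → ℝ) (hrx : r (φ x) ≠ 0)
    (hF1 : DifferentiableAt ℝ (fun y => d2 Ψ (φ y) (grad φ y)) x)
    (hF2 : DifferentiableAt ℝ (fun y => r (φ y) • d2 ψ (φ y) (grad φ y)) x) :
    d1 Ψ (φ x) (grad φ x) - diver (fun y => d2 Ψ (φ y) (grad φ y)) x =
      r (φ x) *
        (d1 ψ (φ x) (grad φ x)
          - (1 / r (φ x)) * diver (fun y => r (φ y) • d2 ψ (φ y) (grad φ y)) x)
      + ψ (φ x, grad φ x) * ((ρ₁ - ρ₂) / 2) :=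
  chemical_potential_identity_one_general ρ₁ ρ₂ ψ hψ φ r hr Ψ hΨ x hrx
end

section
/- Third identity of Lemma 3.1 (chain rule for variational derivatives): let g : ℝ → ℝ be twice continuously differentiable, Ψ : ℝ × ℝ^d → ℝ continuously differentiable, and c : ℝ^d → ℝ twice continuously differentiable. Define Ψ̌(a, q) = Ψ(g(a), g'(a) q). Fix x ∈ ℝ^d and assume the vector fields y ↦ ∂₂Ψ(g(c(y)), g'(c(y)) ∇c(y)) and y ↦ ∂₂Ψ̌(c(y), ∇c(y)) are differentiable at x. Define μ(x) = ∂₁Ψ(g(c(x)), g'(c(x)) ∇c(x)) − div[y ↦ ∂₂Ψ(g(c(y)), g'(c(y)) ∇c(y))](x) and μ̌(x) = ∂₁Ψ̌(c(x), ∇c(x)) − div[y ↦ ∂₂Ψ̌(c(y), ∇c(y))](x). Then μ̌(x) = g'(c(x)) · μ(x). -/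
/-! Write `Ψ̌ = Ψ ∘ T` with `T (a, q) = (g a, g' a • q)`. The chain rule gives
`∂₂Ψ̌ = g' • (∂₂Ψ ∘ T)` and `∂₁Ψ̌ = g' (∂₁Ψ ∘ T) + g'' ⟪q, ∂₂Ψ ∘ T⟫`. Along `q = ∇c` the flux of `Ψ̌`
is thus `g'(c)` times the flux of `Ψ`, and the product rule for the divergence produces exactly
the term `g''(c) ⟪∇c, ∂₂Ψ⟫` that cancels the extra term of `∂₁Ψ̌`. -/

theorem fderiv_comp_rescale_apply {E F : Type*} [NormedAddCommGroup E] [NormedSpace ℝ E]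
    [NormedAddCommGroup F] [NormedSpace ℝ F] {g : ℝ → ℝ} {Ψ : ℝ × E → F} {a : ℝ} {q : E}
    (hg : DifferentiableAt ℝ g a) (hg' : DifferentiableAt ℝ (deriv g) a)
    (hΨ : DifferentiableAt ℝ Ψ (g a, deriv g a • q)) (s : ℝ) (v : E) :
    fderiv ℝ (fun z : ℝ × E => Ψ (g z.1, deriv g z.1 • z.2)) (a, q) (s, v) =
      fderiv ℝ Ψ (g a, deriv g a • q)
        (s * deriv g a, deriv g a • v + (s * deriv (deriv g) a) • q) := by
  have hfst : HasFDerivAt (Prod.fst : ℝ × E → ℝ) (ContinuousLinearMap.fst ℝ ℝ E) (a, q) :=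
    hasFDerivAt_fst
  have hsnd : HasFDerivAt (Prod.snd : ℝ × E → E) (ContinuousLinearMap.snd ℝ ℝ E) (a, q) :=
    hasFDerivAt_snd
  have hgfst := hg.hasDerivAt.comp_hasFDerivAt (a, q) hfst
  have hg'fst := hg'.hasDerivAt.comp_hasFDerivAt (a, q) hfst
  have hT := hgfst.prodMk (hg'fst.fun_smul hsnd)
  have hΨT : HasFDerivAt (fun z : ℝ × E => Ψ (g z.1, deriv g z.1 • z.2)) _ (a, q) :=
    hΨ.hasFDerivAt.comp (a, q) hT
  rw [hΨT.fderiv]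
  simp [mul_comm, mul_smul]

theorem fderiv_apply_zero_eq_sum_d2 {d : ℕ} (Ψ : ℝ × (Fin d → ℝ) → ℝ) (a : ℝ)
    (q v : Fin d → ℝ) :
    fderiv ℝ Ψ (a, q) (0, v) = ∑ i, v i * d2 Ψ a q i := by
  have hv : ((0 : ℝ), v) = ∑ i, v i • ((0 : ℝ), (Pi.single i 1 : Fin d → ℝ)) := by
    ext <;> simp [Prod.fst_sum, Prod.snd_sum, Pi.single_apply]
  rw [hv, map_sum]
  simp only [map_smul, smul_eq_mul, d2]

theorem grad_comp {d : ℕ} {h : ℝ → ℝ} {c : (Fin d → ℝ) → ℝ} {x : Fin d → ℝ}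
    (hh : DifferentiableAt ℝ h (c x)) (hc : DifferentiableAt ℝ c x) :
    grad (fun y => h (c y)) x = deriv h (c x) • grad c x := by
  ext i
  simp [grad, fderiv_fun_comp x hh hc, mul_comm]

theorem diver_smul {d : ℕ} {φ : (Fin d → ℝ) → ℝ} {F : (Fin d → ℝ) → Fin d → ℝ}
    {x : Fin d → ℝ} (hφ : DifferentiableAt ℝ φ x) (hF : DifferentiableAt ℝ F x) :
    diver (fun y => φ y • F y) x = φ x * diver F x + ∑ i, grad φ x i * F x i := by
  have h : HasFDerivAt (fun y => φ y • F y) _ x := hφ.hasFDerivAt.fun_smul hF.hasFDerivAt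
  simp [diver, grad, h.fderiv, Finset.sum_add_distrib, Finset.mul_sum, mul_comm]

section Rescale

variable {d : ℕ} {g : ℝ → ℝ} {Ψ Ψc : ℝ × (Fin d → ℝ) → ℝ} {a : ℝ} {q : Fin d → ℝ}

theorem d2_of_rescale (hΨc : ∀ b p, Ψc (b, p) = Ψ (g b, deriv g b • p))
    (hg : DifferentiableAt ℝ g a) (hg' : DifferentiableAt ℝ (deriv g) a)
    (hΨ : DifferentiableAt ℝ Ψ (g a, deriv g a • q)) :
    d2 Ψc a q = deriv g a • d2 Ψ (g a) (deriv g a • q) := by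
  obtain rfl : Ψc = fun z => Ψ (g z.1, deriv g z.1 • z.2) := funext fun z => hΨc z.1 z.2
  ext i
  have hpair : ((0 : ℝ), deriv g a • (Pi.single i 1 : Fin d → ℝ)) =
      deriv g a • ((0 : ℝ), (Pi.single i 1 : Fin d → ℝ)) := by
    simp
  simp only [d2, fderiv_comp_rescale_apply hg hg' hΨ, zero_mul, zero_smul, add_zero, hpair,
    map_smul, Pi.smul_apply]

theorem d1_of_rescale (hΨc : ∀ b p, Ψc (b, p) = Ψ (g b, deriv g b • p))
    (hg : DifferentiableAt ℝ g a) (hg' : DifferentiableAt ℝ (deriv g) a)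
    (hΨ : DifferentiableAt ℝ Ψ (g a, deriv g a • q)) :
    d1 Ψc a q = deriv g a * d1 Ψ (g a) (deriv g a • q) +
      deriv (deriv g) a * ∑ i, q i * d2 Ψ (g a) (deriv g a • q) i := by
  obtain rfl : Ψc = fun z => Ψ (g z.1, deriv g z.1 • z.2) := funext fun z => hΨc z.1 z.2
  have hsplit : ((deriv g a, deriv (deriv g) a • q) : ℝ × (Fin d → ℝ)) =
      deriv g a • ((1 : ℝ), (0 : Fin d → ℝ)) + (0, deriv (deriv g) a • q) := by
    simp
  simp only [d1, fderiv_comp_rescale_apply hg hg' hΨ, one_mul, smul_zero, zero_add]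
  rw [hsplit, map_add, map_smul, fderiv_apply_zero_eq_sum_d2]
  simp only [Pi.smul_apply, smul_eq_mul, mul_assoc, ← Finset.mul_sum]

end Rescale

theorem chemical_potential_chain_rule_general
    {d : ℕ}
    (g : ℝ → ℝ) (hg : ContDiff ℝ 2 g)
    (Ψ : ℝ × (Fin d → ℝ) → ℝ) (hΨ : ContDiff ℝ 1 Ψ)
    (c : (Fin d → ℝ) → ℝ) (hc : ContDiff ℝ 2 c)
    (Ψc : ℝ × (Fin d → ℝ) → ℝ)
    (hΨc : ∀ a q, Ψc (a, q) = Ψ (g a, deriv g a • q))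
    (x : Fin d → ℝ)
    (hF1 : DifferentiableAt ℝ
      (fun y => d2 Ψ (g (c y)) (deriv g (c y) • grad c y)) x) :
    d1 Ψc (c x) (grad c x) - diver (fun y => d2 Ψc (c y) (grad c y)) x =
      deriv g (c x) *
        (d1 Ψ (g (c x)) (deriv g (c x) • grad c x)
          - diver (fun y => d2 Ψ (g (c y)) (deriv g (c y) • grad c y)) x) := by
  have hgd := hg.differentiable two_ne_zero
  have hg'd := hg.differentiable_deriv_two
  have hcd := hc.differentiable two_ne_zero
  have hΨd := hΨ.differentiable one_ne_zero
  have hflux : (fun y => d2 Ψc (c y) (grad c y)) =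
      fun y => deriv g (c y) • d2 Ψ (g (c y)) (deriv g (c y) • grad c y) :=
    funext fun y => d2_of_rescale hΨc (hgd _) (hg'd _) (hΨd _)
  have hg'c : DifferentiableAt ℝ (fun y => deriv g (c y)) x := (hg'd _).comp x (hcd x)
  rw [hflux, diver_smul hg'c hF1, grad_comp (hg'd _) (hcd x),
    d1_of_rescale hΨc (hgd _) (hg'd _) (hΨd _)]
  simp only [Pi.smul_apply, smul_eq_mul, mul_assoc, ← Finset.mul_sum]
  ring

/-- **Third identity of Lemma 3.1 (chain rule for variational derivatives).**
Let `g : ℝ → ℝ` be `C²`, `Ψ : ℝ × ℝ^d → ℝ` be `C¹`, `c : ℝ^d → ℝ` be `C²`, and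
let `Ψ̌(a,q) = Ψ(g(a), g'(a) q)` be the transformed free energy.  If the two
flux fields are differentiable at `x`, then the chemical potentials
`μ(x) = ∂₁Ψ(g(c),g'(c)∇c) - div(∂₂Ψ(g(c),g'(c)∇c))` and
`μ̌(x) = ∂₁Ψ̌(c,∇c) - div(∂₂Ψ̌(c,∇c))` satisfy `μ̌(x) = g'(c(x)) μ(x)`. -/
theorem chemical_potential_chain_rule
    {d : ℕ}
    (g : ℝ → ℝ) (hg : ContDiff ℝ 2 g)
    (Ψ : ℝ × (Fin d → ℝ) → ℝ) (hΨ : ContDiff ℝ 1 Ψ)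
    (c : (Fin d → ℝ) → ℝ) (hc : ContDiff ℝ 2 c)
    (Ψc : ℝ × (Fin d → ℝ) → ℝ)
    (hΨc : ∀ a q, Ψc (a, q) = Ψ (g a, deriv g a • q))
    (x : Fin d → ℝ)
    (hF1 : DifferentiableAt ℝ
      (fun y => d2 Ψ (g (c y)) (deriv g (c y) • grad c y)) x)
    (hF2 : DifferentiableAt ℝ (fun y => d2 Ψc (c y) (grad c y)) x) :
    d1 Ψc (c x) (grad c x) - diver (fun y => d2 Ψc (c y) (grad c y)) x =
      deriv g (c x) *
        (d1 Ψ (g (c x)) (deriv g (c x) • grad c x)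
          - diver (fun y => d2 Ψ (g (c y)) (deriv g (c y) • grad c y)) x) :=
  chemical_potential_chain_rule_general g hg Ψ hΨ c hc Ψc hΨc x hF1
end

section
/- Equivalence of modeling restrictions (1) and (2) of Theorem 3.1 (scalar core): let ρ₁, ρ₂ > 0 and φ, ψ, μ₂, p₂ ∈ ℝ. Set [[ρ]] = (ρ₁−ρ₂)/2, {ρ} = (ρ₁+ρ₂)/2, ρ = {ρ} + [[ρ]] φ, α = −[[ρ]]/{ρ}, Ψ = ρ ψ, μ₁ = ρ μ₂ + ψ [[ρ]], and p₁ = p₂ + ψ {ρ}. Then μ₁ + α p₁ = ρ μ₂ + α p₂ and p₁ + μ₁ φ − Ψ = p₂ + ρ μ₂ φ. Consequently the dissipation integrands of the volume-measure-based formulation (with chemical potential μ₁, pressure p₁, free energy Ψ) and of the mass-measure-based formulation (with chemical potential μ₂, pressure p₂, free energy density ψ) coincide. -/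
/-!
Passing from the mass-based to the volume-based quantities shifts the chemical potential by
`ψ [[ρ]]` and the pressure by `ψ {ρ}`. Since `α {ρ} = -[[ρ]]`, these shifts cancel in `μ + α p`;
in `p + μ φ` they add up to `ψ ({ρ} + [[ρ]] φ) = ρ ψ = Ψ`, which the free energy removes.
-/

section

variable {R : Type*} [CommRing R]

theorem add_mul_add_mul_eq_of_mul_eq_neg {α A J : R} (hαA : α * A = -J) (μ p ψ : R) :
    μ + ψ * J + α * (p + ψ * A) = μ + α * p := by
  linear_combination ψ * hαA

theorem add_add_mul_mul_sub_mul_eq {ρ A J φ : R} (hρ : ρ = A + J * φ) (μ p ψ : R) :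
    p + ψ * A + (μ + ψ * J) * φ - ρ * ψ = p + μ * φ := by
  rw [hρ]
  ring

end

theorem restriction_equivalence_volume_mass_general
    (ρ₁ ρ₂ φ ψ μ₂ p₂ J A ρ α Ψ μ₁ p₁ : ℝ)
    (hρ₁ : 0 < ρ₁) (hρ₂ : 0 < ρ₂)
    (hA : A = (ρ₁ + ρ₂) / 2)
    (hρ : ρ = A + J * φ)
    (hα : α = -J / A)
    (hΨ : Ψ = ρ * ψ)
    (hμ₁ : μ₁ = ρ * μ₂ + ψ * J)
    (hp₁ : p₁ = p₂ + ψ * A) :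
    μ₁ + α * p₁ = ρ * μ₂ + α * p₂ ∧
    p₁ + μ₁ * φ - Ψ = p₂ + ρ * μ₂ * φ := by
  have hαA : α * A = -J := by
    rw [hα, div_mul_cancel₀ _ (by rw [hA]; positivity)]
  rw [hμ₁, hp₁, hΨ]
  exact ⟨add_mul_add_mul_eq_of_mul_eq_neg hαA _ _ _, add_add_mul_mul_sub_mul_eq hρ _ _ _⟩

/-- **Equivalence of modeling restrictions (1) and (2) of Theorem 3.1
(scalar core).**
Let `ρ₁, ρ₂ > 0` and `φ, ψ, μ₂, p₂ ∈ ℝ`.  With `J = [[ρ]] = (ρ₁-ρ₂)/2`,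
`A = {ρ} = (ρ₁+ρ₂)/2`, mixture density `ρ = A + J φ`, `α = -J/A`, free energy
`Ψ = ρ ψ`, chemical potential `μ₁ = ρ μ₂ + ψ J` and pressure
`p₁ = p₂ + ψ A`, one has `μ₁ + α p₁ = ρ μ₂ + α p₂` and
`p₁ + μ₁ φ - Ψ = p₂ + ρ μ₂ φ`, so the dissipation integrands of the
volume-measure-based and mass-measure-based formulations coincide. -/
theorem restriction_equivalence_volume_mass
    (ρ₁ ρ₂ φ ψ μ₂ p₂ J A ρ α Ψ μ₁ p₁ : ℝ)
    (hρ₁ : 0 < ρ₁) (hρ₂ : 0 < ρ₂)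
    (hJ : J = (ρ₁ - ρ₂) / 2) (hA : A = (ρ₁ + ρ₂) / 2)
    (hρ : ρ = A + J * φ)
    (hα : α = -J / A)
    (hΨ : Ψ = ρ * ψ)
    (hμ₁ : μ₁ = ρ * μ₂ + ψ * J)
    (hp₁ : p₁ = p₂ + ψ * A) :
    μ₁ + α * p₁ = ρ * μ₂ + α * p₂ ∧
    p₁ + μ₁ * φ - Ψ = p₂ + ρ * μ₂ * φ :=
  restriction_equivalence_volume_mass_general ρ₁ ρ₂ φ ψ μ₂ p₂ J A ρ α Ψ μ₁ p₁ hρ₁ hρ₂ hA hρ hα hΨ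
    hμ₁ hp₁
end
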